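/- Let ∇ be a torsion-free connection and X_j, X_k coordinate vector fields near p such that ∇_{(X_k + εX_j)}∇_{(X_k+εX_j)}(X_k+εX_j)|_p = 0 for all ε. Then 3∇_{X_k}∇_{X_k}X_j|_p = R(X_k, X_j)X_k|_p, where R is the curvature tensor. -/
import Mathlib


/-- Let `T` denote the trilinear map `(A, B, C) ↦ ∇_A ∇_B C |_p` for the
Fermi coordinate vector fields (commuting, torsion-free, so `T a b c = T a c b`), and
let `R` be the curvature tensor at `p`, so `R a b c = T a b c - T b a c` for commuting
coordinate fields.  If `∇_{(X_k + ε X_j)} ∇_{(X_k + ε X_j)} (X_k + ε X_j) |_p = 0` for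
all `ε`, then `3 ∇_{X_k} ∇_{X_k} X_j |_p = R(X_k, X_j) X_k |_p`. -/
theorem stmt2 {V W : Type*} [AddCommGroup V] [Module ℝ V] [AddCommGroup W] [Module ℝ W]
    (T : V →ₗ[ℝ] V →ₗ[ℝ] V →ₗ[ℝ] W) (R : V → V → V → W)
    (hsymm : ∀ a b c, T a b c = T a c b)
    (hR : ∀ a b c, R a b c = T a b c - T b a c)
    (Xk Xj : V)
    (hgeo : ∀ ε : ℝ, T (Xk + ε • Xj) (Xk + ε • Xj) (Xk + ε • Xj) = 0) :
    (3 : ℝ) • T Xk Xk Xj = R Xk Xj Xk := by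
  have h1 := hgeo 1
  have h2 := hgeo (-1)
  have h3 := hgeo 2
  have h4 := hgeo (-2)
  simp only [map_add, map_smul, LinearMap.add_apply, LinearMap.smul_apply] at h1 h2 h3 h4
  rw [hR]
  have hs := hsymm Xk Xj Xk
  linear_combination (norm := module) ((8:ℝ)/12) • h1 - ((8:ℝ)/12) • h2
    - ((1:ℝ)/12) • h3 + ((1:ℝ)/12) • h4 + (-2 : ℝ) • hs
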